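/- arXiv:0902.2725 — 5 statements merged into one kernel-verified Lean document; each statement's English description precedes it below -/
import Mathlib

section
/- Let n ≥ 0, θ ∈ ℝ, and a₀, a₁, …, a_{2n+1} ∈ ℂ with a₀ ≠ 0, and let z₁, …, z_{2n+1} ∈ ℂ be the roots (with multiplicity) of the numerator, i.e. a₀z^{2n+1} + a₁z^{2n} + … + a_{2n+1} = a₀·∏_{k=1}^{2n+1}(z − z_k) for all z ∈ ℂ. Set α = θ + 2·arg(a₀). Then for every z ∈ ℂ such that 1 + conj(z_k)·z ≠ 0 for all k, one has e^{iθ}·(a₀z^{2n+1} + a₁z^{2n} + … + a_{2n+1}) / (−conj(a_{2n+1})z^{2n+1} + conj(a_{2n})z^{2n} − … + conj(a₀)) = e^{iα}·∏_{k=1}^{2n+1} (z − z_k)/(1 + conj(z_k)·z), where the denominator on the left is the polynomial whose coefficient of z^j is (−1)^j·conj(a_j) for j = 0, …, 2n+1 (indexing a_j as the coefficient of z^{2n+1−j} in the numerator). -/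
/-!
Substituting `w = v⁻¹` in the factorisation of the numerator gives the reversed identity
`∑ a_j v^j = a₀ ∏ (1 - z_k v)`; conjugating it at `v = -conj w` turns the denominator into
`conj a₀ ∏ (1 + conj z_k w)`. What is left of the constants is `a₀ / conj a₀ = e^{2 i arg a₀}`.
-/

open Complex ComplexConjugate

theorem div_conj_eq_exp_two_arg_mul_I {a : ℂ} (ha : a ≠ 0) :
    a / conj a = exp (2 * arg a * I) := by
  have hnorm : (‖a‖ : ℂ) ≠ 0 := by exact_mod_cast norm_ne_zero_iff.mpr ha
  have hconj : conj a = ‖a‖ * exp (-(arg a * I)) := by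
    conv_lhs => rw [← norm_mul_exp_arg_mul_I a]
    rw [map_mul, conj_ofReal, ← exp_conj, map_mul, conj_ofReal, conj_I, mul_neg]
  rw [hconj]
  nth_rewrite 1 [← norm_mul_exp_arg_mul_I a]
  rw [mul_div_mul_left _ _ hnorm, ← exp_sub]
  ring_nf

theorem sum_mul_pow_eq_mul_prod_one_sub_mul {K : Type*} [Field K] {m : ℕ} {a : Fin (m + 1) → K}
    {z : Fin m → K} (hroots : ∀ w, ∑ j, a j * w ^ (m - j) = a 0 * ∏ k, (w - z k)) (v : K) :
    ∑ j, a j * v ^ (j : ℕ) = a 0 * ∏ k, (1 - z k * v) := by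
  rcases eq_or_ne v 0 with rfl | hv
  · simp [Fin.sum_univ_succ]
  have hsum : v ^ m * ∑ j, a j * v⁻¹ ^ (m - j) = ∑ j, a j * v ^ (j : ℕ) := by
    rw [Finset.mul_sum]
    refine Finset.sum_congr rfl fun j _ => ?_
    rw [inv_pow_sub₀ hv (Nat.lt_succ_iff.mp j.isLt)]
    field_simp
  have hprod : ∏ k, (1 - z k * v) = v ^ m * ∏ k, (v⁻¹ - z k) :=
    calc ∏ k, (1 - z k * v) = ∏ k, v * (v⁻¹ - z k) :=
          Finset.prod_congr rfl fun k _ => by field_simp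
      _ = v ^ m * ∏ k, (v⁻¹ - z k) := by
          rw [Finset.prod_mul_distrib, Finset.prod_const, Finset.card_univ, Fintype.card_fin]
  rw [← hsum, hroots, hprod]
  ring

theorem sum_neg_one_pow_mul_conj_mul_pow {R : Type*} [CommRing R] [StarRing R] {m : ℕ}
    {a : Fin (m + 1) → R} {z : Fin m → R}
    (hrev : ∀ v, ∑ j, a j * v ^ (j : ℕ) = a 0 * ∏ k, (1 - z k * v)) (w : R) :
    ∑ j : Fin (m + 1), (-1) ^ (j : ℕ) * conj (a j) * w ^ (j : ℕ) =
      conj (a 0) * ∏ k, (1 + conj (z k) * w) := by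
  have hconj := congrArg conj (hrev (-conj w))
  simp only [map_sum, map_mul, map_prod, map_pow, map_neg, map_sub, map_one,
    starRingEnd_self_apply] at hconj
  simp only [mul_neg, sub_neg_eq_add] at hconj
  rw [← hconj]
  exact Finset.sum_congr rfl fun j _ => by rw [neg_pow]; ring

theorem stmt_1 (n : ℕ) (θ : ℝ) (a : Fin (2 * n + 2) → ℂ) (ha : a 0 ≠ 0)
    (z : Fin (2 * n + 1) → ℂ)
    (hroots : ∀ w : ℂ,
      ∑ j : Fin (2 * n + 2), a j * w ^ (2 * n + 1 - (j : ℕ)) = a 0 * ∏ k, (w - z k))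
    (α : ℝ) (hα : α = θ + 2 * Complex.arg (a 0)) :
    ∀ w : ℂ, (∀ k, 1 + (starRingEnd ℂ) (z k) * w ≠ 0) →
      Complex.exp (θ * Complex.I) *
            (∑ j : Fin (2 * n + 2), a j * w ^ (2 * n + 1 - (j : ℕ))) /
          (∑ j : Fin (2 * n + 2), (-1 : ℂ) ^ (j : ℕ) * (starRingEnd ℂ) (a j) * w ^ (j : ℕ)) =
        Complex.exp (α * Complex.I) *
          ∏ k, (w - z k) / (1 + (starRingEnd ℂ) (z k) * w) := by
  intro w hw
  have hden := sum_neg_one_pow_mul_conj_mul_pow (sum_mul_pow_eq_mul_prod_one_sub_mul hroots) w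
  have hphase : exp (α * I) = exp (θ * I) * (a 0 / conj (a 0)) := by
    rw [div_conj_eq_exp_two_arg_mul_I ha, ← exp_add, hα]
    push_cast
    ring_nf
  have hconj : conj (a 0) ≠ 0 := (map_ne_zero _).mpr ha
  have hprod : ∏ k, (1 + conj (z k) * w) ≠ 0 := Finset.prod_ne_zero_iff.mpr fun k _ => hw k
  rw [hroots w, hden, hphase, Finset.prod_div_distrib]
  field_simp
end

section
/- Let n ≥ 0, α ∈ ℝ, z₁, …, z_{2n+1} ∈ ℂ, and define F(z) = e^{iα}·∏_{k=1}^{2n+1} (z − z_k)/(1 + conj(z_k)·z). Then for every z ∈ ℂ with z ≠ 0 such that all factors occurring on both sides are defined and nonzero (i.e. 1 + conj(z_k)·z ≠ 0, z ≠ z_k, and conj(z) ≠ conj(z_k) for all k), one has F(−1/conj(z)) = −1/conj(F(z)). -/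
/-!
Each factor `b_a(z) = (z - a) / (1 + conj a * z)` satisfies `b_a(h z) = h (b_a z)` for
`h z = -1 / conj z`, as a direct computation shows. The map `w ↦ -w⁻¹` is multiplicative up to
the sign `-1`, so it commutes with products of an odd number of factors, and the unimodular
constant `u = e^{iα}` passes through `h` because `conj u = u⁻¹`.
-/

open ComplexConjugate

lemma sub_div_one_add_conj_mul_neg_one_div_conj {K : Type*} [Field K] [StarRing K] {a z : K}
    (hz : z ≠ 0) :
    (-1 / conj z - a) / (1 + conj a * (-1 / conj z)) = -(conj ((z - a) / (1 + conj a * z)))⁻¹ := by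
  have hz' : conj z ≠ 0 := (map_ne_zero _).2 hz
  have hnum : -1 / conj z - a = -(1 + a * conj z) / conj z := by
    field_simp
    ring
  have hden : 1 + conj a * (-1 / conj z) = (conj z - conj a) / conj z := by
    field_simp
    ring
  rw [hnum, hden, div_div_div_cancel_right₀ hz', map_div₀, inv_div]
  simp only [map_add, map_mul, map_sub, map_one, starRingEnd_self_apply, neg_div]

lemma Finset.prod_neg_inv_of_odd_card {ι K : Type*} [DivisionCommMonoid K] [HasDistribNeg K]
    {s : Finset ι} (hs : Odd s.card) (w : ι → K) : ∏ i ∈ s, -(w i)⁻¹ = -(∏ i ∈ s, w i)⁻¹ := by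
  rw [Finset.prod_neg, hs.neg_one_pow, Finset.prod_inv_distrib, neg_one_mul]

lemma Complex.conj_exp_ofReal_mul_I (α : ℝ) : conj (exp (α * I)) = (exp (α * I))⁻¹ := by
  rw [← exp_conj, ← exp_neg, map_mul, conj_ofReal, conj_I, mul_neg]

theorem stmt_3 (n : ℕ) (α : ℝ) (zs : Fin (2 * n + 1) → ℂ) (F : ℂ → ℂ)
    (hF : ∀ z : ℂ, F z = Complex.exp (α * Complex.I) *
      ∏ k, (z - zs k) / (1 + (starRingEnd ℂ) (zs k) * z)) :
    ∀ z : ℂ, z ≠ 0 →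
      (∀ k, 1 + (starRingEnd ℂ) (zs k) * z ≠ 0) →
      (∀ k, z ≠ zs k) →
      (∀ k, (starRingEnd ℂ) z ≠ (starRingEnd ℂ) (zs k)) →
      F (-1 / (starRingEnd ℂ) z) = -1 / (starRingEnd ℂ) (F z) := by
  intro z hz _ _ _
  have hodd : Odd (Finset.univ : Finset (Fin (2 * n + 1))).card := by simp
  rw [hF, hF, Finset.prod_congr rfl fun k _ => sub_div_one_add_conj_mul_neg_one_div_conj hz,
    Finset.prod_neg_inv_of_odd_card hodd, map_mul, map_prod, Complex.conj_exp_ofReal_mul_I,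
    div_mul_eq_div_div, div_inv_eq_mul, neg_one_mul, neg_div, mul_neg, div_eq_mul_inv]
end

section
/- Let r > 0, θ ∈ ℝ, z₀ = r·e^{iθ}, and G(z) = (z − z₀)/(1 + conj(z₀)·z). Then the complex derivative of G at the fixed point i·e^{iθ} equals (1 − r² − 2ri)/(1 + r²); in particular its absolute value is 1 and its real part is (1 − r²)/(1 + r²). -/
/-!
The map `G` has derivative `(1 + conj z₀ * z₀) / (1 + conj z₀ * p) ^ 2` at `p`. At `p = I e^{iθ}`
the phases of `conj z₀ = r e^{-iθ}` and `p` cancel, so the derivative is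
`(1 + r²) / (1 + r I)² = (1 - r I)² / (1 + r²)`, a quotient of numbers of equal modulus.
-/

open Complex ComplexConjugate

theorem hasDerivAt_sub_div_one_add_mul {𝕜 : Type*} [NontriviallyNormedField 𝕜] {a b p : 𝕜}
    (h : 1 + b * p ≠ 0) :
    HasDerivAt (fun z => (z - a) / (1 + b * z)) ((1 + b * a) / (1 + b * p) ^ 2) p := by
  refine (((hasDerivAt_id' p).sub_const a).div
    (((hasDerivAt_id' p).const_mul b).const_add 1) h).congr_deriv ?_
  ring

theorem conj_ofReal_mul_exp_mul_mul_exp (r θ : ℝ) (c : ℂ) :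
    conj (r * exp (θ * I)) * (c * exp (θ * I)) = r * c := by
  have hunit : conj (exp (θ * I)) * exp (θ * I) = 1 := by
    rw [← exp_conj, ← exp_add]
    simp
  rw [map_mul, conj_ofReal]
  linear_combination (r * c) * hunit

theorem one_add_ofReal_mul_I_ne_zero (r : ℝ) : 1 + r * I ≠ 0 := fun h => by
  simpa using congrArg re h

theorem one_add_ofReal_sq_ne_zero (r : ℝ) : 1 + (r : ℂ) ^ 2 ≠ 0 := by
  exact_mod_cast (by positivity : (1 + r ^ 2 : ℝ) ≠ 0)

theorem one_add_sq_div_one_add_mul_I_sq (r : ℝ) :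
    (1 + (r : ℂ) * r) / (1 + r * I) ^ 2 = (1 - (r : ℂ) ^ 2 - 2 * r * I) / (1 + (r : ℂ) ^ 2) := by
  rw [div_eq_div_iff (pow_ne_zero 2 (one_add_ofReal_mul_I_ne_zero r)) (one_add_ofReal_sq_ne_zero r)]
  linear_combination (3 * (r : ℂ) ^ 2 + 2 * r ^ 3 * I + r ^ 4) * I_sq

theorem norm_one_sub_sq_sub_two_mul_I_div (r : ℝ) :
    ‖(1 - (r : ℂ) ^ 2 - 2 * r * I) / (1 + (r : ℂ) ^ 2)‖ = 1 := by
  have hnum : 1 - (r : ℂ) ^ 2 - 2 * r * I = (1 - r * I) ^ 2 := by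
    linear_combination -(r : ℂ) ^ 2 * I_sq
  have hden : 1 + (r : ℂ) ^ 2 = ((1 + r ^ 2 : ℝ) : ℂ) := by push_cast; ring
  rw [hnum, hden, norm_div, norm_pow, Complex.sq_norm, norm_real,
    Real.norm_of_nonneg (by positivity), normSq_apply]
  field_simp
  simp

theorem re_one_sub_sq_sub_two_mul_I_div (r : ℝ) :
    ((1 - (r : ℂ) ^ 2 - 2 * r * I) / (1 + (r : ℂ) ^ 2)).re = (1 - r ^ 2) / (1 + r ^ 2) := by
  rw [show 1 + (r : ℂ) ^ 2 = ((1 + r ^ 2 : ℝ) : ℂ) by push_cast; ring, div_ofReal_re]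
  simp [← ofReal_pow]

theorem stmt_5_general (r θ : ℝ) (z₀ : ℂ)
    (hz₀ : z₀ = (r : ℂ) * Complex.exp (θ * Complex.I)) (G : ℂ → ℂ)
    (hG : ∀ z : ℂ, G z = (z - z₀) / (1 + (starRingEnd ℂ) z₀ * z)) :
    deriv G (Complex.I * Complex.exp (θ * Complex.I)) =
      (1 - (r : ℂ) ^ 2 - 2 * (r : ℂ) * Complex.I) / (1 + (r : ℂ) ^ 2) ∧
    ‖deriv G (Complex.I * Complex.exp (θ * Complex.I))‖ = 1 ∧
    (deriv G (Complex.I * Complex.exp (θ * Complex.I))).re = (1 - r ^ 2) / (1 + r ^ 2) := by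
  have hfix : conj z₀ * (I * exp (θ * I)) = r * I := hz₀ ▸ conj_ofReal_mul_exp_mul_mul_exp r θ I
  have hsq : conj z₀ * z₀ = r * r := hz₀ ▸ conj_ofReal_mul_exp_mul_mul_exp r θ r
  have hderiv : deriv G (I * exp (θ * I)) = (1 - r ^ 2 - 2 * r * I) / (1 + r ^ 2) := by
    rw [funext hG, (hasDerivAt_sub_div_one_add_mul (hfix ▸ one_add_ofReal_mul_I_ne_zero r)).deriv,
      hfix, hsq, one_add_sq_div_one_add_mul_I_sq]
  rw [hderiv]
  exact ⟨rfl, norm_one_sub_sq_sub_two_mul_I_div r, re_one_sub_sq_sub_two_mul_I_div r⟩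

theorem stmt_5 (r θ : ℝ) (hr : 0 < r) (z₀ : ℂ)
    (hz₀ : z₀ = (r : ℂ) * Complex.exp (θ * Complex.I)) (G : ℂ → ℂ)
    (hG : ∀ z : ℂ, G z = (z - z₀) / (1 + (starRingEnd ℂ) z₀ * z)) :
    deriv G (Complex.I * Complex.exp (θ * Complex.I)) =
      (1 - (r : ℂ) ^ 2 - 2 * (r : ℂ) * Complex.I) / (1 + (r : ℂ) ^ 2) ∧
    ‖deriv G (Complex.I * Complex.exp (θ * Complex.I))‖ = 1 ∧
    (deriv G (Complex.I * Complex.exp (θ * Complex.I))).re = (1 - r ^ 2) / (1 + r ^ 2) :=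
  stmt_5_general r θ z₀ hz₀ G hG
end

section
/- Let θ ∈ ℝ, p ≥ 0, m ≥ 0, and z₁, …, z_m ∈ ℂ with z_k ≠ 0 for all k, and define F(z) = e^{iθ}·z^{2p+1}·∏_{k=1}^{m} (z² − z_k²)/(1 − conj(z_k)²·z²). Then for every z ∈ ℂ with z ≠ 0 such that all factors on both sides are defined and nonzero (i.e. 1 − conj(z_k)²·z² ≠ 0, z² ≠ z_k², and conj(z²) ≠ conj(z_k²) for all k), one has F(−1/conj(z)) = −1/conj(F(z)). -/
/-!
Writing `h z = -1 / conj z`, each factor of `F` is mapped by `h` to the inverse of its conjugate: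
`u * conj u = 1` for the unimodular constant `u = e^{iθ}`, `(h z)^(2p+1) * conj (z^(2p+1)) = (-1)^(2p+1) = -1`
since the exponent is odd, and `B_a (h z) * conj (B_a z) = 1` for each even Blaschke factor
`B_a z = (z² - a²) / (1 - conj a² z²)`. Multiplying, `F (h z) * conj (F z) = -1`.
-/

open ComplexConjugate

namespace Complex

noncomputable def evenBlaschkeFactor (a z : ℂ) : ℂ := (z ^ 2 - a ^ 2) / (1 - conj a ^ 2 * z ^ 2)

theorem exp_ofReal_mul_I_mul_conj (θ : ℝ) : exp (θ * I) * conj (exp (θ * I)) = 1 := by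
  rw [mul_conj', norm_exp_ofReal_mul_I, ofReal_one, one_pow]

theorem neg_one_div_conj_pow_mul_conj_pow {n : ℕ} (hn : Odd n) {z : ℂ} (hz : z ≠ 0) :
    (-1 / conj z) ^ n * conj (z ^ n) = -1 := by
  rw [map_pow, ← mul_pow, div_mul_cancel₀ _ ((map_ne_zero _).2 hz), hn.neg_one_pow]

theorem evenBlaschkeFactor_neg_one_div_conj_mul_conj {a z : ℂ} (hz : z ≠ 0) (hza : z ^ 2 ≠ a ^ 2)
    (hden : 1 - conj a ^ 2 * z ^ 2 ≠ 0) :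
    evenBlaschkeFactor a (-1 / conj z) * conj (evenBlaschkeFactor a z) = 1 := by
  have hc : conj z ≠ 0 := (map_ne_zero _).2 hz
  have hnum : conj z ^ 2 - conj a ^ 2 ≠ 0 := by
    rw [sub_ne_zero, ← map_pow, ← map_pow]
    exact fun h => hza ((starRingEnd ℂ).injective h)
  have hden' : 1 - conj z ^ 2 * a ^ 2 ≠ 0 := by
    simpa [mul_comm] using (map_ne_zero conj).2 hden
  unfold evenBlaschkeFactor
  simp only [map_div₀, map_sub, map_one, map_mul, map_pow, conj_conj]
  field_simp

end Complex

open Complex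

theorem stmt_11_general (θ : ℝ) (p m : ℕ) (zs : Fin m → ℂ) (F : ℂ → ℂ)
    (hF : ∀ z : ℂ, F z = Complex.exp (θ * Complex.I) * z ^ (2 * p + 1) *
      ∏ k, (z ^ 2 - zs k ^ 2) / (1 - ((starRingEnd ℂ) (zs k)) ^ 2 * z ^ 2)) :
    ∀ z : ℂ, z ≠ 0 →
      (∀ k, 1 - ((starRingEnd ℂ) (zs k)) ^ 2 * z ^ 2 ≠ 0) →
      (∀ k, z ^ 2 ≠ zs k ^ 2) →
      (∀ k, (starRingEnd ℂ) (z ^ 2) ≠ (starRingEnd ℂ) (zs k ^ 2)) →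
      F (-1 / (starRingEnd ℂ) z) = -1 / (starRingEnd ℂ) (F z) := by
  intro z hz hden hza _
  have hmul : F (-1 / conj z) * conj (F z) = -1 := by
    rw [hF, hF, map_mul, map_mul, map_prod]
    calc _ = (exp (θ * I) * conj (exp (θ * I))) * ((-1 / conj z) ^ (2 * p + 1) * conj (z ^ (2 * p + 1)))
          * ∏ k, evenBlaschkeFactor (zs k) (-1 / conj z) * conj (evenBlaschkeFactor (zs k) z) := by
          rw [Finset.prod_mul_distrib]; unfold evenBlaschkeFactor; ring
      _ = 1 * -1 * 1 := by
          rw [exp_ofReal_mul_I_mul_conj, neg_one_div_conj_pow_mul_conj_pow (odd_two_mul_add_one p) hz,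
            Finset.prod_eq_one fun k _ =>
              evenBlaschkeFactor_neg_one_div_conj_mul_conj hz (hza k) (hden k)]
      _ = -1 := by norm_num
  exact eq_div_of_mul_eq (right_ne_zero_of_mul (hmul ▸ neg_ne_zero.2 one_ne_zero)) hmul

theorem stmt_11 (θ : ℝ) (p m : ℕ) (zs : Fin m → ℂ) (hzs : ∀ k, zs k ≠ 0) (F : ℂ → ℂ)
    (hF : ∀ z : ℂ, F z = Complex.exp (θ * Complex.I) * z ^ (2 * p + 1) *
      ∏ k, (z ^ 2 - zs k ^ 2) / (1 - ((starRingEnd ℂ) (zs k)) ^ 2 * z ^ 2)) :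
    ∀ z : ℂ, z ≠ 0 →
      (∀ k, 1 - ((starRingEnd ℂ) (zs k)) ^ 2 * z ^ 2 ≠ 0) →
      (∀ k, z ^ 2 ≠ zs k ^ 2) →
      (∀ k, (starRingEnd ℂ) (z ^ 2) ≠ (starRingEnd ℂ) (zs k ^ 2)) →
      F (-1 / (starRingEnd ℂ) z) = -1 / (starRingEnd ℂ) (F z) :=
  stmt_11_general θ p m zs F hF
end

section
/- Let θ ∈ ℝ, p ≥ 0, m ≥ 0 with p + m ≥ 1, and z₁, …, z_m ∈ ℂ with 0 < |z_k| < 1 for all k, and define F(z) = e^{iθ}·z^{2p+1}·∏_{k=1}^{m} (z² − z_k²)/(1 − conj(z_k)²·z²). Then for every z ∈ ℂ with |z| < 1, the sequence of iterates F^{∘n}(z) converges to 0 as n → ∞; moreover, the convergence F^{∘n} → 0 is uniform on every compact subset of the open unit disk. -/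
/-!
Write `F z = Q z • z` with `Q z = e^{iθ} z^{2p} ∏ₖ B_{zₖ²}(z²)`, where the Blaschke factor
`B_a(w) = (w - a) / (1 - ā w)` has modulus `< 1` on the unit disk. Since `p + m ≥ 1`, at least one
factor of `Q` has modulus `< 1`, so `‖Q‖ < 1` on the disk, and by compactness `‖Q‖ ≤ c < 1` on each
closed disk `‖z‖ ≤ r < 1`. There `‖F^[n] z‖ ≤ cⁿ r`.
-/

open Complex ComplexConjugate Metric Filter Topology Set

noncomputable def blaschkeFactor (a w : ℂ) : ℂ := (w - a) / (1 - conj a * w)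

noncomputable def blaschkeProduct {m : ℕ} (a : Fin m → ℂ) (w : ℂ) : ℂ :=
  ∏ k, blaschkeFactor (a k) w

lemma normSq_one_sub_conj_mul_sub_normSq_sub (a w : ℂ) :
    normSq (1 - conj a * w) - normSq (w - a) = (1 - normSq a) * (1 - normSq w) := by
  simp only [normSq_apply, sub_re, sub_im, mul_re, mul_im, one_re, one_im, conj_re, conj_im]
  ring

lemma one_sub_conj_mul_ne_zero {a w : ℂ} (ha : ‖a‖ < 1) (hw : ‖w‖ < 1) : 1 - conj a * w ≠ 0 := by
  rw [sub_ne_zero]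
  refine fun h => (h ▸ norm_one (α := ℂ)).not_lt ?_
  rw [norm_mul, norm_conj]
  exact mul_lt_one_of_nonneg_of_lt_one_left (norm_nonneg a) ha hw.le

lemma norm_blaschkeFactor_lt_one {a w : ℂ} (ha : ‖a‖ < 1) (hw : ‖w‖ < 1) :
    ‖blaschkeFactor a w‖ < 1 := by
  have hD := one_sub_conj_mul_ne_zero ha hw
  rw [blaschkeFactor, norm_div, div_lt_one (norm_pos_iff.2 hD), norm_def, norm_def]
  apply Real.sqrt_lt_sqrt (normSq_nonneg _)
  have hid := normSq_one_sub_conj_mul_sub_normSq_sub a w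
  have ha' : normSq a < 1 := by
    rw [← Complex.sq_norm]; exact pow_lt_one₀ (norm_nonneg a) ha two_ne_zero
  have hw' : normSq w < 1 := by
    rw [← Complex.sq_norm]; exact pow_lt_one₀ (norm_nonneg w) hw two_ne_zero
  nlinarith [mul_pos (sub_pos.2 ha') (sub_pos.2 hw')]

lemma continuousOn_blaschkeFactor {a : ℂ} (ha : ‖a‖ < 1) :
    ContinuousOn (blaschkeFactor a) (ball 0 1) := by
  refine (continuousOn_id.sub continuousOn_const).div
    (continuousOn_const.sub (continuousOn_const.mul continuousOn_id)) fun w hw => ?_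
  exact one_sub_conj_mul_ne_zero ha (mem_ball_zero_iff.1 hw)

section BlaschkeProduct

variable {m : ℕ} {a : Fin m → ℂ}

lemma norm_blaschkeProduct_le_one (ha : ∀ k, ‖a k‖ < 1) {w : ℂ} (hw : ‖w‖ < 1) :
    ‖blaschkeProduct a w‖ ≤ 1 := by
  rw [blaschkeProduct, norm_prod]
  exact Finset.prod_le_one (fun k _ => norm_nonneg _)
    fun k _ => (norm_blaschkeFactor_lt_one (ha k) hw).le

lemma norm_blaschkeProduct_lt_one (hm : 0 < m) (ha : ∀ k, ‖a k‖ < 1) {w : ℂ} (hw : ‖w‖ < 1) :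
    ‖blaschkeProduct a w‖ < 1 := by
  obtain ⟨m, rfl⟩ := Nat.exists_eq_add_of_lt hm
  rw [blaschkeProduct, Fin.prod_univ_succ, norm_mul]
  exact mul_lt_one_of_nonneg_of_lt_one_left (norm_nonneg _) (norm_blaschkeFactor_lt_one (ha 0) hw)
    (norm_blaschkeProduct_le_one (fun k => ha k.succ) hw)

lemma continuousOn_blaschkeProduct (ha : ∀ k, ‖a k‖ < 1) :
    ContinuousOn (blaschkeProduct a) (ball 0 1) :=
  continuousOn_finsetProd _ fun k _ => continuousOn_blaschkeFactor (ha k)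

lemma norm_pow_mul_blaschkeProduct_lt_one {p : ℕ} (hpm : 1 ≤ p + m) (ha : ∀ k, ‖a k‖ < 1)
    {z w : ℂ} (hz : ‖z‖ < 1) (hw : ‖w‖ < 1) : ‖z ^ p * blaschkeProduct a w‖ < 1 := by
  rw [norm_mul, norm_pow]
  rcases Nat.eq_zero_or_pos p with rfl | hp
  · rw [pow_zero, one_mul]
    exact norm_blaschkeProduct_lt_one (by omega) ha hw
  · exact mul_lt_one_of_nonneg_of_lt_one_left (by positivity)
      (pow_lt_one₀ (norm_nonneg z) hz hp.ne') (norm_blaschkeProduct_le_one ha hw)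

end BlaschkeProduct

lemma IsCompact.exists_forall_le_of_forall_lt {X : Type*} [TopologicalSpace X] {K : Set X}
    (hK : IsCompact K) {g : X → ℝ} (hg : ContinuousOn g K) {y : ℝ} (hy : ∀ x ∈ K, g x < y) :
    ∃ c < y, ∀ x ∈ K, g x ≤ c := by
  rcases K.eq_empty_or_nonempty with rfl | hne
  · exact ⟨y - 1, by linarith, by simp⟩
  · obtain ⟨x₀, hx₀, hmax⟩ := hK.exists_isMaxOn hne hg
    exact ⟨g x₀, hy x₀ hx₀, hmax⟩

section Iterate

variable {E : Type*} [SeminormedAddCommGroup E] {f : E → E} {c r : ℝ}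

lemma norm_iterate_le_pow_mul (hc0 : 0 ≤ c) (hc1 : c ≤ 1)
    (hf : ∀ z ∈ closedBall 0 r, ‖f z‖ ≤ c * ‖z‖) (n : ℕ) :
    ∀ z ∈ closedBall 0 r, ‖f^[n] z‖ ≤ c ^ n * ‖z‖ := by
  induction n with
  | zero => simp
  | succ n ih =>
    intro z hz
    have hfz : f z ∈ closedBall 0 r := by
      rw [mem_closedBall_zero_iff] at hz ⊢
      nlinarith [hf z (mem_closedBall_zero_iff.2 hz), norm_nonneg z]
    calc ‖f^[n + 1] z‖ = ‖f^[n] (f z)‖ := by rw [Function.iterate_succ_apply]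
      _ ≤ c ^ n * ‖f z‖ := ih _ hfz
      _ ≤ c ^ n * (c * ‖z‖) := mul_le_mul_of_nonneg_left (hf z hz) (pow_nonneg hc0 n)
      _ = c ^ (n + 1) * ‖z‖ := by ring

lemma tendstoUniformlyOn_iterate_closedBall (hc0 : 0 ≤ c) (hc1 : c < 1)
    (hf : ∀ z ∈ closedBall 0 r, ‖f z‖ ≤ c * ‖z‖) :
    TendstoUniformlyOn (fun n z => f^[n] z) (fun _ => 0) atTop (closedBall 0 r) := by
  rw [Metric.tendstoUniformlyOn_iff]
  intro ε hε
  have hlim : Tendsto (fun n : ℕ => c ^ n * r) atTop (𝓝 0) := by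
    simpa using (tendsto_pow_atTop_nhds_zero_of_lt_one hc0 hc1).mul_const r
  filter_upwards [hlim.eventually (gt_mem_nhds hε)] with n hn z hz
  rw [dist_zero_left]
  calc ‖f^[n] z‖ ≤ c ^ n * ‖z‖ := norm_iterate_le_pow_mul hc0 hc1.le hf n z hz
    _ ≤ c ^ n * r := mul_le_mul_of_nonneg_left (mem_closedBall_zero_iff.1 hz) (pow_nonneg hc0 n)
    _ < ε := hn

end Iterate

lemma tendstoUniformlyOn_iterate_of_eq_smul {𝕜 E : Type*} [NormedField 𝕜] [NormedAddCommGroup E]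
    [NormedSpace 𝕜 E] [ProperSpace E] {f : E → E} {Q : E → 𝕜} (hf : ∀ z, f z = Q z • z)
    (hQc : ContinuousOn Q (ball 0 1)) (hQ : ∀ z ∈ ball 0 1, ‖Q z‖ < 1)
    {K : Set E} (hK : IsCompact K) (hK1 : K ⊆ ball 0 1) :
    TendstoUniformlyOn (fun n z => f^[n] z) (fun _ => 0) atTop K := by
  obtain ⟨r, ⟨hr0, hr1⟩, hKr⟩ := exists_pos_lt_subset_ball one_pos hK.isClosed hK1
  have hr : closedBall (0 : E) r ⊆ ball 0 1 := closedBall_subset_ball hr1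
  obtain ⟨c, hc1, hc⟩ := (isCompact_closedBall (0 : E) r).exists_forall_le_of_forall_lt
    (hQc.norm.mono hr) fun z hz => hQ z (hr hz)
  have hc0 : 0 ≤ c := (norm_nonneg _).trans (hc 0 (mem_closedBall_self hr0.le))
  refine (tendstoUniformlyOn_iterate_closedBall hc0 hc1 fun z hz => ?_).mono
    (hKr.trans ball_subset_closedBall)
  rw [hf, norm_smul]
  exact mul_le_mul_of_nonneg_right (hc z hz) (norm_nonneg z)

theorem stmt_16 (θ : ℝ) (p m : ℕ) (hpm : 1 ≤ p + m) (zs : Fin m → ℂ)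
    (hzs : ∀ k, 0 < ‖zs k‖ ∧ ‖zs k‖ < 1) (F : ℂ → ℂ)
    (hF : ∀ z : ℂ, F z = Complex.exp (θ * Complex.I) * z ^ (2 * p + 1) *
      ∏ k, (z ^ 2 - zs k ^ 2) / (1 - ((starRingEnd ℂ) (zs k)) ^ 2 * z ^ 2)) :
    (∀ z : ℂ, ‖z‖ < 1 →
      Filter.Tendsto (fun n : ℕ => F^[n] z) Filter.atTop (nhds 0)) ∧
    ∀ K : Set ℂ, IsCompact K → K ⊆ Metric.ball (0 : ℂ) 1 →
      TendstoUniformlyOn (fun (n : ℕ) (z : ℂ) => F^[n] z) (fun _ => 0) Filter.atTop K := by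
  set a : Fin m → ℂ := fun k => zs k ^ 2
  set Q : ℂ → ℂ := fun z => exp (θ * I) * (z ^ (2 * p) * blaschkeProduct a (z ^ 2))
  have ha : ∀ k, ‖a k‖ < 1 := fun k => by
    simpa [a, norm_pow] using pow_lt_one₀ (norm_nonneg _) (hzs k).2 two_ne_zero
  have hsq : MapsTo (· ^ 2) (ball (0 : ℂ) 1) (ball 0 1) := fun z hz => by
    simpa [norm_pow] using pow_lt_one₀ (norm_nonneg z) (mem_ball_zero_iff.1 hz) two_ne_zero
  have hFQ : ∀ z, F z = Q z • z := fun z => by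
    simp only [hF, Q, a, blaschkeProduct, blaschkeFactor, map_pow, smul_eq_mul]
    ring
  have hQ : ∀ z ∈ ball (0 : ℂ) 1, ‖Q z‖ < 1 := fun z hz => by
    rw [norm_mul, norm_exp_ofReal_mul_I, one_mul]
    exact norm_pow_mul_blaschkeProduct_lt_one (by omega) ha (mem_ball_zero_iff.1 hz)
      (mem_ball_zero_iff.1 (hsq hz))
  have hQc : ContinuousOn Q (ball 0 1) :=
    continuousOn_const.mul ((continuousOn_pow _).mul
      ((continuousOn_blaschkeProduct ha).comp (continuousOn_pow 2) hsq))
  have hunif := fun K hK hK1 => tendstoUniformlyOn_iterate_of_eq_smul hFQ hQc hQ (K := K) hK hK1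
  exact ⟨fun z hz => (hunif {z} isCompact_singleton (by simpa using hz)).tendsto_at rfl, hunif⟩
end
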